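/- arXiv:2304.03354 — 2 statements merged into one kernel-verified Lean document; each statement's English description precedes it below -/
import Mathlib

section
/- Suppose ⊛ : {0,1}×{0,1} → {0,1} is not monotone (with respect to the order 0 < 1 componentwise). Then the tensor operator 𝒜 ⊛ ℬ does not weakly preserve dominated convexity: there exist nonempty dominated convex families 𝒜, ℬ ⊆ 𝒫(X) (for some finite X) such that 𝒜 ⊛ ℬ is nonempty and not dominated. -/
open Set

/-- A family of sets is convex if it is closed under set-theoretic betweenness. -/
def IsConvexFam {X : Type*} (𝒜 : Set (Set X)) : Prop :=
  ∀ S ∈ 𝒜, ∀ T ∈ 𝒜, ∀ C : Set X, S ⊆ C → C ⊆ T → C ∈ 𝒜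

/-- A family is dominated if its union belongs to it. -/
def IsDominatedFam {X : Type*} (𝒜 : Set (Set X)) : Prop := ⋃₀ 𝒜 ∈ 𝒜

/-- A family is supported if it is nonempty and its intersection belongs to it. -/
def IsSupportedFam {X : Type*} (𝒜 : Set (Set X)) : Prop := 𝒜.Nonempty ∧ ⋂₀ 𝒜 ∈ 𝒜

/-- A family is an interval if it equals `[A,B] = {C | A ⊆ C ⊆ B}` for some `A ⊆ B`. -/
def IsIntervalFam {X : Type*} (𝒜 : Set (Set X)) : Prop :=
  ∃ A B : Set X, A ⊆ B ∧ 𝒜 = Set.Icc A B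

/-- `𝒢` dominates `𝒜` if there are dominated convex families `𝒟 G ⊆ 𝒜` (`G ∈ 𝒢`)
with `⋃ G ∈ 𝒢, 𝒟 G = 𝒜` and `⋃₀ (𝒟 G) = G`. -/
def DominatesFam {X : Type*} (𝒢 𝒜 : Set (Set X)) : Prop :=
  𝒢 ⊆ 𝒜 ∧ ∃ 𝒟 : Set X → Set (Set X),
    (∀ G ∈ 𝒢, 𝒟 G ⊆ 𝒜 ∧ IsConvexFam (𝒟 G) ∧ IsDominatedFam (𝒟 G) ∧ ⋃₀ (𝒟 G) = G) ∧
    (⋃ G ∈ 𝒢, 𝒟 G) = 𝒜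

/-- `𝒦` supports `𝒜` if there are supported convex families `𝒮 K ⊆ 𝒜` (`K ∈ 𝒦`)
with `⋃ K ∈ 𝒦, 𝒮 K = 𝒜` and `⋂₀ (𝒮 K) = K`. -/
def SupportsFam {X : Type*} (𝒦 𝒜 : Set (Set X)) : Prop :=
  𝒦 ⊆ 𝒜 ∧ ∃ 𝒮 : Set X → Set (Set X),
    (∀ K ∈ 𝒦, 𝒮 K ⊆ 𝒜 ∧ IsConvexFam (𝒮 K) ∧ IsSupportedFam (𝒮 K) ∧ ⋂₀ (𝒮 K) = K) ∧
    (⋃ K ∈ 𝒦, 𝒮 K) = 𝒜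

/-- The upper dimension: the minimal cardinality of a dominating subfamily. -/
noncomputable def upperDim {X : Type*} (𝒜 : Set (Set X)) : ℕ∞ :=
  sInf {n : ℕ∞ | ∃ 𝒢 : Set (Set X), DominatesFam 𝒢 𝒜 ∧ 𝒢.encard = n}

/-- The dual upper dimension: the minimal cardinality of a supporting subfamily. -/
noncomputable def dualDim {X : Type*} (𝒜 : Set (Set X)) : ℕ∞ :=
  sInf {n : ℕ∞ | ∃ 𝒦 : Set (Set X), SupportsFam 𝒦 𝒜 ∧ 𝒦.encard = n}

/-- The cylindrical dimension: the minimal number of intervals whose union is `𝒜`. -/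
noncomputable def cylDim {X : Type*} (𝒜 : Set (Set X)) : ℕ∞ :=
  sInf {n : ℕ∞ | ∃ 𝕀 : Set (Set (Set X)),
    (∀ J ∈ 𝕀, IsIntervalFam J) ∧ ⋃₀ 𝕀 = 𝒜 ∧ 𝕀.encard = n}

open Classical in
noncomputable def chiFun {X : Type*} (A : Set X) (x : X) : Bool := decide (x ∈ A)

/-- The set-theoretic operation corresponding to a binary operation on `{0,1}`. -/
noncomputable def setOp {X : Type*} (op : Bool → Bool → Bool) (A B : Set X) : Set X :=
  {x | op (chiFun A x) (chiFun B x) = true}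

/-- The tensor operation on families corresponding to a binary operation on `{0,1}`. -/
noncomputable def tensorFam {X : Type*} (op : Bool → Bool → Bool)
    (𝒜 ℬ : Set (Set X)) : Set (Set X) :=
  Set.image2 (setOp op) 𝒜 ℬ

/-- The convex shadow of `A` in `𝒜`. -/
def convexShadow {X : Type*} (𝒜 : Set (Set X)) (A : Set X) : Set (Set X) :=
  {B | B ⊆ A ∧ Set.Icc B A ⊆ 𝒜}

/-- Domain of a relation. -/
def relDom {X Y : Type*} (R : Set (X × Y)) : Set X := {x | ∃ y, (x, y) ∈ R}

/-- Range of a relation. -/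
def relRg {X Y : Type*} (R : Set (X × Y)) : Set Y := {y | ∃ x, (x, y) ∈ R}

/-- The family of (partial) functions from `X` to `Y`, as sets of pairs. -/
def partialFunFam (X Y : Type*) : Set (Set (X × Y)) :=
  {f | ∀ x y y', (x, y) ∈ f → (x, y') ∈ f → y = y'}

/-- The family of relations on `X` with disjoint domain and range. -/
def exclFam (X : Type*) : Set (Set (X × X)) :=
  {R | relDom R ∩ relRg R = ∅}

/-- The family of relations on `X` whose domain is included in their range. -/
def inclFam (X : Type*) : Set (Set (X × X)) :=
  {R | relDom R ⊆ relRg R}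

/-- The family of anonymous relations: every point of the domain has two distinct images. -/
def anonFam (X Y : Type*) : Set (Set (X × Y)) :=
  {R | ∀ x ∈ relDom R, ∃ y y' : Y, y ≠ y' ∧ (x, y) ∈ R ∧ (x, y') ∈ R}

/-- The family of rectangles `A × B`. -/
def rectFam (X Y : Type*) : Set (Set (X × Y)) :=
  {P | ∃ (A : Set X) (B : Set Y), P = A ×ˢ B}

/-- General tensor disjunction of an indexed family of families of sets. -/
def gTensorDisj {ι X : Type*} (𝒜 : ι → Set (Set X)) : Set (Set X) :=
  {U | ∃ f : ι → Set X, (∀ i, f i ∈ 𝒜 i) ∧ U = ⋃ i, f i}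

/-- The Kripke operator associated to a relation `ℛ ⊆ 𝒫(Y) × 𝒫(X)^n`. -/
def kripkeOp {X Y : Type*} {n : ℕ} (ℛ : Set (Set Y × (Fin n → Set X)))
    (𝒜 : Fin n → Set (Set X)) : Set (Set Y) :=
  {B | ∃ A : Fin n → Set X, (∀ i, A i ∈ 𝒜 i) ∧ (B, A) ∈ ℛ}

/-!
If `⊛` is not monotone, then for some `c` one of the maps `a ↦ a ⊛ c`, `a ↦ c ⊛ a` is negation.
Tensoring with the one-element family consisting of the constant set with value `c` is then
complementation, which sends the dominated convex family of nonempty sets to the family of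
proper subsets; when `X` has two points the proper subsets cover `X`, so the latter family is
not dominated.
-/

def IsDominatedConvexCounterexample {X : Type*} (op : Bool → Bool → Bool)
    (𝒜 ℬ : Set (Set X)) : Prop :=
  𝒜.Nonempty ∧ ℬ.Nonempty ∧
    IsDominatedFam 𝒜 ∧ IsConvexFam 𝒜 ∧
    IsDominatedFam ℬ ∧ IsConvexFam ℬ ∧
    (tensorFam op 𝒜 ℬ).Nonempty ∧ ¬ IsDominatedFam (tensorFam op 𝒜 ℬ)

section Families

variable {X : Type*}

lemma isDominatedFam_singleton (A : Set X) : IsDominatedFam {A} := by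
  simp [IsDominatedFam]

lemma isConvexFam_singleton (A : Set X) : IsConvexFam {A} := by
  rintro S rfl T rfl C hSC hCT
  exact hCT.antisymm hSC

lemma isConvexFam_setOf_nonempty : IsConvexFam {S : Set X | S.Nonempty} :=
  fun _ hS _ _ _ hSC _ => hS.mono hSC

lemma isDominatedFam_setOf_nonempty [Nonempty X] : IsDominatedFam {S : Set X | S.Nonempty} :=
  nonempty_sUnion.mpr ⟨univ, univ_nonempty, univ_nonempty⟩

lemma sUnion_setOf_ne_univ [Nontrivial X] : ⋃₀ {T : Set X | T ≠ univ} = univ := by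
  refine eq_univ_of_forall fun x => ⟨{x}, ?_, rfl⟩
  obtain ⟨y, hy⟩ := exists_ne x
  exact ne_univ_iff_exists_notMem _ |>.mpr ⟨y, hy⟩

lemma not_isDominatedFam_setOf_ne_univ [Nontrivial X] :
    ¬ IsDominatedFam {T : Set X | T ≠ univ} := by
  simp [IsDominatedFam, sUnion_setOf_ne_univ]

lemma image_compl_setOf_nonempty :
    compl '' {S : Set X | S.Nonempty} = {T : Set X | T ≠ univ} := by
  ext T
  simp [compl_eq_comm, nonempty_iff_ne_empty, ← compl_empty]

end Families

section Tensor

variable {X : Type*} (op : Bool → Bool → Bool)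

lemma setOp_setOf_const_eq_compl {c : Bool} (h₀ : op false c = true) (h₁ : op true c = false)
    (S : Set X) : setOp op S {_x | c = true} = Sᶜ := by
  ext x
  by_cases hx : x ∈ S <;> simp [setOp, chiFun, hx, h₀, h₁]

lemma tensorFam_swap (𝒜 ℬ : Set (Set X)) :
    tensorFam (fun u v => op v u) ℬ 𝒜 = tensorFam op 𝒜 ℬ :=
  image2_swap _ _ _

lemma IsDominatedConvexCounterexample.swap {𝒜 ℬ : Set (Set X)}
    (h : IsDominatedConvexCounterexample op 𝒜 ℬ) :
    IsDominatedConvexCounterexample (fun u v => op v u) ℬ 𝒜 := by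
  obtain ⟨h𝒜, hℬ, hd𝒜, hc𝒜, hdℬ, hcℬ, hne, hnd⟩ := h
  rw [← tensorFam_swap] at hne hnd
  exact ⟨hℬ, h𝒜, hdℬ, hcℬ, hd𝒜, hc𝒜, hne, hnd⟩

lemma tensorFam_setOf_nonempty_const {c : Bool} (h₀ : op false c = true)
    (h₁ : op true c = false) :
    tensorFam op {S : Set X | S.Nonempty} {{_x | c = true}} = {T : Set X | T ≠ univ} := by
  rw [tensorFam, image2_singleton_right, ← image_compl_setOf_nonempty]
  exact image_congr fun S _ => setOp_setOf_const_eq_compl op h₀ h₁ S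

lemma isDominatedConvexCounterexample_of_flip [Nontrivial X] {c : Bool}
    (h₀ : op false c = true) (h₁ : op true c = false) :
    IsDominatedConvexCounterexample op {S : Set X | S.Nonempty} {{_x | c = true}} := by
  have htensor := tensorFam_setOf_nonempty_const (X := X) op h₀ h₁
  refine ⟨⟨univ, univ_nonempty⟩, singleton_nonempty _, isDominatedFam_setOf_nonempty,
    isConvexFam_setOf_nonempty, isDominatedFam_singleton _, isConvexFam_singleton _, ?_, ?_⟩
  · exact htensor ▸ ⟨∅, empty_ne_univ⟩
  · exact htensor ▸ not_isDominatedFam_setOf_ne_univ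

end Tensor

lemma exists_flip_of_not_monotone {op : Bool → Bool → Bool}
    (hmono : ¬ ∀ a a' b b' : Bool, a ≤ a' → b ≤ b' → op a b ≤ op a' b') :
    ∃ c, (op false c = true ∧ op true c = false) ∨ (op c false = true ∧ op c true = false) := by
  simp only [not_forall, not_le, Bool.lt_iff] at hmono
  obtain ⟨a, a', b, b', ha, hb, hfalse, htrue⟩ := hmono
  -- the drop from `op a b` to `op a' b'` happens either between `(a, b)` and `(a', b)`
  -- or between `(a', b)` and `(a', b')`
  cases hmid : op a' b
  · refine ⟨b, .inl ?_⟩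
    revert ha; cases a <;> cases a' <;> simp_all
  · refine ⟨a', .inr ?_⟩
    revert hb; cases b <;> cases b' <;> simp_all

theorem stmt8 (op : Bool → Bool → Bool)
    (hmono : ¬ ∀ a a' b b' : Bool, a ≤ a' → b ≤ b' → op a b ≤ op a' b') :
    ∃ (X : Type) (_ : Finite X) (𝒜 ℬ : Set (Set X)),
      𝒜.Nonempty ∧ ℬ.Nonempty ∧
      IsDominatedFam 𝒜 ∧ IsConvexFam 𝒜 ∧
      IsDominatedFam ℬ ∧ IsConvexFam ℬ ∧
      (tensorFam op 𝒜 ℬ).Nonempty ∧ ¬ IsDominatedFam (tensorFam op 𝒜 ℬ) := by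
  obtain ⟨c, ⟨h₀, h₁⟩ | ⟨h₀, h₁⟩⟩ := exists_flip_of_not_monotone hmono
  · exact ⟨Bool, inferInstance, _, _, isDominatedConvexCounterexample_of_flip op h₀ h₁⟩
  · exact ⟨Bool, inferInstance, _, _,
      (isDominatedConvexCounterexample_of_flip (fun u v => op v u) h₀ h₁).swap⟩
end

section
/- Let X, Y be finite sets with |X| = ℓ ≥ 2, |Y| = n ≥ 2, and let 𝒴 = {R ⊆ X × Y : for all x ∈ dom(R) there exist distinct y, y' ∈ Y with (x,y), (x,y') ∈ R} (anonymous relations). Then DD(𝒴) = 2^ℓ, and DDd(𝒴) = Σ_{k=0}^{ℓ} C(ℓ,k)·C(n,2)^k = (1 + n(n−1)/2)^ℓ. -/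
open Set

/-! Both dimensions are computed from a characterisation of domination: `𝒢` dominates `𝒜` iff
every `A ∈ 𝒜` lies below some `G ∈ 𝒢` with the whole interval `[A, G]` inside `𝒜` (dually for
support). For anonymous relations such an interval `[S, T]` never enlarges the domain, since adding
one pair over a new point leaves that point with a single image. So a dominating family needs a
member over every domain `A ⊆ X`, and the rectangles `A × Y` suffice: `2 ^ ℓ` of them. A
supporting family must contain every minimal anonymous relation, where each point is related to
zero or two points of `Y`; there are `(1 + C(n, 2)) ^ ℓ` of these, and they suffice. -/

def convexUpperShadow {α : Type*} (𝒜 : Set (Set α)) (A : Set α) : Set (Set α) :=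
  {B | A ⊆ B ∧ Icc A B ⊆ 𝒜}

section Domination
variable {α : Type*} {𝒜 𝒢 𝒦 : Set (Set α)} {A : Set α}

lemma isConvexFam_convexShadow (𝒜 : Set (Set α)) (A : Set α) :
    IsConvexFam (convexShadow 𝒜 A) :=
  fun _ ⟨_, hS⟩ _ ⟨hT, _⟩ _ hSC hCT =>
    ⟨hCT.trans hT, (Icc_subset_Icc_left hSC).trans hS⟩

lemma isConvexFam_convexUpperShadow (𝒜 : Set (Set α)) (A : Set α) :
    IsConvexFam (convexUpperShadow 𝒜 A) :=
  fun _ ⟨hS, _⟩ _ ⟨_, hT⟩ _ hSC hCT =>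
    ⟨hS.trans hSC, (Icc_subset_Icc_right hCT).trans hT⟩

lemma self_mem_convexShadow (hA : A ∈ 𝒜) : A ∈ convexShadow 𝒜 A :=
  ⟨subset_rfl, by rw [Icc_self]; exact singleton_subset_iff.mpr hA⟩

lemma self_mem_convexUpperShadow (hA : A ∈ 𝒜) : A ∈ convexUpperShadow 𝒜 A :=
  ⟨subset_rfl, by rw [Icc_self]; exact singleton_subset_iff.mpr hA⟩

lemma sUnion_convexShadow (hA : A ∈ 𝒜) : ⋃₀ convexShadow 𝒜 A = A :=
  (sUnion_subset fun _ hB => hB.1).antisymm (subset_sUnion_of_mem (self_mem_convexShadow hA))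

lemma sInter_convexUpperShadow (hA : A ∈ 𝒜) : ⋂₀ convexUpperShadow 𝒜 A = A :=
  (sInter_subset_of_mem (self_mem_convexUpperShadow hA)).antisymm (subset_sInter fun _ hB => hB.1)

theorem dominatesFam_iff :
    DominatesFam 𝒢 𝒜 ↔ 𝒢 ⊆ 𝒜 ∧ ∀ A ∈ 𝒜, ∃ G ∈ 𝒢, A ⊆ G ∧ Icc A G ⊆ 𝒜 := by
  refine ⟨fun ⟨h𝒢, 𝒟, h𝒟, hcover⟩ => ⟨h𝒢, fun A hA => ?_⟩, fun ⟨h𝒢, hbelow⟩ => ?_⟩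
  · obtain ⟨G, hG, hAG⟩ := mem_iUnion₂.mp (hcover ▸ hA : A ∈ ⋃ G ∈ 𝒢, 𝒟 G)
    obtain ⟨h𝒟𝒜, hconv, hdom, hunion⟩ := h𝒟 G hG
    have hGG : G ∈ 𝒟 G := by rwa [IsDominatedFam, hunion] at hdom
    have hsub : A ⊆ G := hunion ▸ subset_sUnion_of_mem hAG
    exact ⟨G, hG, hsub, fun C hC => h𝒟𝒜 (hconv A hAG G hGG C hC.1 hC.2)⟩
  -- the convex shadows of the members of `𝒢` witness the domination
  · refine ⟨h𝒢, convexShadow 𝒜, fun G hG => ?_, ?_⟩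
    · have hG𝒜 := h𝒢 hG
      refine ⟨fun B hB => hB.2 ⟨subset_rfl, hB.1⟩, isConvexFam_convexShadow 𝒜 G, ?_,
        sUnion_convexShadow hG𝒜⟩
      rw [IsDominatedFam, sUnion_convexShadow hG𝒜]
      exact self_mem_convexShadow hG𝒜
    · refine Subset.antisymm (iUnion₂_subset fun G _ B hB => hB.2 ⟨subset_rfl, hB.1⟩) ?_
      intro A hA𝒜
      obtain ⟨G, hG, hAG, hI⟩ := hbelow A hA𝒜
      exact mem_iUnion₂.mpr ⟨G, hG, hAG, hI⟩

theorem supportsFam_iff :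
    SupportsFam 𝒦 𝒜 ↔ 𝒦 ⊆ 𝒜 ∧ ∀ A ∈ 𝒜, ∃ K ∈ 𝒦, K ⊆ A ∧ Icc K A ⊆ 𝒜 := by
  refine ⟨fun ⟨h𝒦, 𝒮, h𝒮, hcover⟩ => ⟨h𝒦, fun A hA => ?_⟩, fun ⟨h𝒦, habove⟩ => ?_⟩
  · obtain ⟨K, hK, hAK⟩ := mem_iUnion₂.mp (hcover ▸ hA : A ∈ ⋃ K ∈ 𝒦, 𝒮 K)
    obtain ⟨h𝒮𝒜, hconv, ⟨-, hsupp⟩, hinter⟩ := h𝒮 K hK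
    have hKK : K ∈ 𝒮 K := by rwa [hinter] at hsupp
    have hsub : K ⊆ A := hinter ▸ sInter_subset_of_mem hAK
    exact ⟨K, hK, hsub, fun C hC => h𝒮𝒜 (hconv K hKK A hAK C hC.1 hC.2)⟩
  · refine ⟨h𝒦, convexUpperShadow 𝒜, fun K hK => ?_, ?_⟩
    · have hK𝒜 := h𝒦 hK
      refine ⟨fun B hB => hB.2 ⟨hB.1, subset_rfl⟩, isConvexFam_convexUpperShadow 𝒜 K,
        ⟨⟨K, self_mem_convexUpperShadow hK𝒜⟩, ?_⟩, sInter_convexUpperShadow hK𝒜⟩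
      rw [sInter_convexUpperShadow hK𝒜]
      exact self_mem_convexUpperShadow hK𝒜
    · refine Subset.antisymm (iUnion₂_subset fun K _ B hB => hB.2 ⟨hB.1, subset_rfl⟩) ?_
      intro A hA𝒜
      obtain ⟨K, hK, hKA, hI⟩ := habove A hA𝒜
      exact mem_iUnion₂.mpr ⟨K, hK, hKA, hI⟩

lemma upperDim_le (h : DominatesFam 𝒢 𝒜) : upperDim 𝒜 ≤ 𝒢.encard :=
  sInf_le ⟨𝒢, h, rfl⟩

lemma le_upperDim {n : ℕ∞} (h : ∀ 𝒢, DominatesFam 𝒢 𝒜 → n ≤ 𝒢.encard) : n ≤ upperDim 𝒜 :=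
  le_sInf fun _ ⟨𝒢, h𝒢, hn⟩ => hn ▸ h 𝒢 h𝒢

lemma dualDim_le (h : SupportsFam 𝒦 𝒜) : dualDim 𝒜 ≤ 𝒦.encard :=
  sInf_le ⟨𝒦, h, rfl⟩

lemma le_dualDim {n : ℕ∞} (h : ∀ 𝒦, SupportsFam 𝒦 𝒜 → n ≤ 𝒦.encard) : n ≤ dualDim 𝒜 :=
  le_sInf fun _ ⟨𝒦, h𝒦, hn⟩ => hn ▸ h 𝒦 h𝒦

end Domination

section Anonymous
variable {X Y : Type*} {R S T : Set (X × Y)}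

lemma relDom_mono (h : R ⊆ S) : relDom R ⊆ relDom S :=
  fun _ ⟨y, hy⟩ => ⟨y, h hy⟩

lemma Icc_subset_anonFam (hR : R ∈ anonFam X Y) (hT : relDom T ⊆ relDom R) :
    Icc R T ⊆ anonFam X Y := by
  intro C ⟨hRC, hCT⟩ x hx
  obtain ⟨y, y', hne, hy, hy'⟩ := hR x (hT (relDom_mono hCT hx))
  exact ⟨y, y', hne, hRC hy, hRC hy'⟩

/-- Adding a single pair over a new point never yields an anonymous relation. -/
lemma relDom_subset_of_Icc_subset_anonFam (hST : S ⊆ T) (h : Icc S T ⊆ anonFam X Y) :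
    relDom T ⊆ relDom S := by
  intro x ⟨y, hxy⟩
  by_contra hx
  have hC : S ∪ {(x, y)} ∈ anonFam X Y :=
    h ⟨subset_union_left, union_subset hST (singleton_subset_iff.mpr hxy)⟩
  obtain ⟨z, z', hne, hz, hz'⟩ := hC x ⟨y, Or.inr rfl⟩
  have image_eq : ∀ w, (x, w) ∈ S ∪ {(x, y)} → w = y := by
    rintro w (hw | hw)
    · exact absurd ⟨w, hw⟩ hx
    · exact congrArg Prod.snd hw
  exact hne ((image_eq z hz).trans (image_eq z' hz').symm)

lemma prod_univ_mem_anonFam [Nontrivial Y] (A : Set X) : A ×ˢ (univ : Set Y) ∈ anonFam X Y := by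
  intro x ⟨_, hx, _⟩
  obtain ⟨y, y', hne⟩ := exists_pair_ne Y
  exact ⟨y, y', hne, ⟨hx, trivial⟩, ⟨hx, trivial⟩⟩

lemma relDom_prod_univ [Nonempty Y] (A : Set X) : relDom (A ×ˢ (univ : Set Y)) = A :=
  Subset.antisymm (fun _ ⟨_, hx, _⟩ => hx) fun _ hx => ⟨Classical.arbitrary Y, hx, trivial⟩

/-- Each anonymous relation `R` is dominated by the rectangle `relDom R ×ˢ univ`. -/
lemma dominatesFam_range_prod_univ [Nontrivial Y] :
    DominatesFam (range fun A : Set X => A ×ˢ (univ : Set Y)) (anonFam X Y) := by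
  refine dominatesFam_iff.mpr ⟨range_subset_iff.mpr prod_univ_mem_anonFam, fun R hR => ?_⟩
  refine ⟨relDom R ×ˢ univ, mem_range_self _, fun p hp => ⟨⟨p.2, hp⟩, trivial⟩, ?_⟩
  exact Icc_subset_anonFam hR (relDom_prod_univ _).subset

lemma relDom_surjOn_of_dominatesFam [Nontrivial Y] {𝒢 : Set (Set (X × Y))}
    (h : DominatesFam 𝒢 (anonFam X Y)) : SurjOn relDom 𝒢 univ := by
  intro A _
  obtain ⟨G, hG, hAG, hI⟩ := (dominatesFam_iff.mp h).2 _ (prod_univ_mem_anonFam A)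
  refine ⟨G, hG, Subset.antisymm ?_ ?_⟩
  · simpa only [relDom_prod_univ] using relDom_subset_of_Icc_subset_anonFam hAG hI
  · simpa only [relDom_prod_univ] using relDom_mono hAG

theorem upperDim_anonFam [Fintype X] [Nontrivial Y] :
    upperDim (anonFam X Y) = ((2 ^ Fintype.card X : ℕ) : ℕ∞) := by
  have hcard : ENat.card (Set X) = ((2 ^ Fintype.card X : ℕ) : ℕ∞) := by
    rw [ENat.card_eq_coe_fintype_card, Fintype.card_set]
  refine le_antisymm ?_ (le_upperDim fun 𝒢 h => ?_)
  · have hinj : Function.Injective fun A : Set X => A ×ˢ (univ : Set Y) := fun A B hAB => by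
      simpa only [relDom_prod_univ] using congrArg relDom hAB
    calc upperDim (anonFam X Y) ≤ (range fun A : Set X => A ×ˢ (univ : Set Y)).encard :=
          upperDim_le dominatesFam_range_prod_univ
      _ = _ := by rw [← image_univ, hinj.encard_image, encard_univ, hcard]
  · calc ((2 ^ Fintype.card X : ℕ) : ℕ∞) = (univ : Set (Set X)).encard := by
          rw [encard_univ, hcard]
      _ ≤ (relDom '' 𝒢).encard := encard_le_encard (relDom_surjOn_of_dominatesFam h)
      _ ≤ 𝒢.encard := encard_image_le _ _

/-- The minimal anonymous relations: `x` is related to the two points of `s` if `g x = some s`,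
and to nothing if `g x = none`. -/
def pairRel (g : X → Option {s : Finset Y // s.card = 2}) : Set (X × Y) :=
  {p | ∃ s ∈ g p.1, p.2 ∈ s.1}

lemma pairRel_injective : Function.Injective (pairRel (X := X) (Y := Y)) := by
  intro g g' h
  funext x
  have hfiber : ∀ y, (∃ s ∈ g x, y ∈ s.1) ↔ ∃ s ∈ g' x, y ∈ s.1 := fun y => Set.ext_iff.mp h (x, y)
  rcases hg : g x with _ | ⟨s, hs⟩ <;> rcases hg' : g' x with _ | ⟨s', hs'⟩ <;>
    simp only [hg, hg', Option.mem_def, Option.some.injEq, exists_eq_left', reduceCtorEq,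
      false_and, exists_false, false_iff, iff_false] at hfiber
  · rfl
  · simp [Finset.eq_empty_of_forall_notMem hfiber] at hs'
  · simp [Finset.eq_empty_of_forall_notMem hfiber] at hs
  · obtain rfl := Finset.ext hfiber
    rfl

lemma pairRel_mem_anonFam (g : X → Option {s : Finset Y // s.card = 2}) :
    pairRel g ∈ anonFam X Y := by
  classical
  rintro x ⟨_, s, hs, _⟩
  obtain ⟨y, y', hne, hs2⟩ := Finset.card_eq_two.mp s.2
  exact ⟨y, y', hne, ⟨s, hs, by simp [hs2]⟩, ⟨s, hs, by simp [hs2]⟩⟩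

lemma exists_pairRel_subset (hR : R ∈ anonFam X Y) :
    ∃ g, pairRel g ⊆ R ∧ relDom R ⊆ relDom (pairRel g) := by
  classical
  choose y y' hne hy hy' using hR
  refine ⟨fun x => if hx : x ∈ relDom R then some ⟨{y x hx, y' x hx}, Finset.card_pair (hne x hx)⟩
    else none, ?_, fun x hx => ⟨y x hx, ⟨_, Finset.card_pair (hne x hx)⟩, by simp [hx], by simp⟩⟩
  rintro ⟨x, z⟩ ⟨s, hs, hz⟩
  by_cases hx : x ∈ relDom R
  · simp only [hx, dif_pos, Option.mem_def, Option.some.injEq] at hs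
    subst hs
    simp only [Finset.mem_insert, Finset.mem_singleton] at hz
    rcases hz with hz | hz <;> rw [hz]
    exacts [hy x _, hy' x _]
  · simp [hx] at hs

/-- Each fiber of `pairRel g` has only two points, so an anonymous subrelation with the same
domain contains all of them. -/
lemma eq_pairRel_of_subset {g : X → Option {s : Finset Y // s.card = 2}} (hR : R ∈ anonFam X Y)
    (hRg : R ⊆ pairRel g) (hdom : relDom (pairRel g) ⊆ relDom R) : R = pairRel g := by
  classical
  refine Subset.antisymm hRg ?_
  rintro ⟨x, y⟩ ⟨s, hs, hys⟩
  obtain ⟨z, z', hne, hz, hz'⟩ := hR x (hdom ⟨y, s, hs, hys⟩)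
  have mem_s : ∀ w, (x, w) ∈ R → w ∈ s.1 := by
    intro w hw
    obtain ⟨t, ht, hwt⟩ := hRg hw
    rwa [Option.mem_unique ht hs] at hwt
  have hs_eq : s.1 = {z, z'} :=
    (Finset.eq_of_subset_of_card_le (Finset.insert_subset (mem_s z hz)
      (Finset.singleton_subset_iff.mpr (mem_s z' hz'))) (by rw [s.2, Finset.card_pair hne])).symm
  rw [hs_eq, Finset.mem_insert, Finset.mem_singleton] at hys
  rcases hys with rfl | rfl
  · exact hz
  · exact hz'

lemma supportsFam_range_pairRel :
    SupportsFam (range (pairRel (X := X) (Y := Y))) (anonFam X Y) := by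
  refine supportsFam_iff.mpr ⟨range_subset_iff.mpr pairRel_mem_anonFam, fun R hR => ?_⟩
  obtain ⟨g, hgR, hdom⟩ := exists_pairRel_subset hR
  exact ⟨pairRel g, mem_range_self g, hgR, Icc_subset_anonFam (pairRel_mem_anonFam g) hdom⟩

lemma range_pairRel_subset_of_supportsFam {𝒦 : Set (Set (X × Y))}
    (h : SupportsFam 𝒦 (anonFam X Y)) : range pairRel ⊆ 𝒦 := by
  rintro _ ⟨g, rfl⟩
  obtain ⟨h𝒦, hsupp⟩ := supportsFam_iff.mp h
  obtain ⟨K, hK, hKg, hI⟩ := hsupp _ (pairRel_mem_anonFam g)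
  rwa [← eq_pairRel_of_subset (h𝒦 hK) hKg (relDom_subset_of_Icc_subset_anonFam hKg hI)]

theorem dualDim_anonFam [Fintype X] [Fintype Y] :
    dualDim (anonFam X Y) = (((1 + (Fintype.card Y).choose 2) ^ Fintype.card X : ℕ) : ℕ∞) := by
  classical
  have hcard : (range (pairRel (X := X) (Y := Y))).encard
      = (((1 + (Fintype.card Y).choose 2) ^ Fintype.card X : ℕ) : ℕ∞) := by
    rw [← image_univ, pairRel_injective.encard_image, encard_univ, ENat.card_eq_coe_fintype_card,
      Fintype.card_fun, Fintype.card_option, Fintype.card_finset_len, add_comm]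
  rw [← hcard]
  exact le_antisymm (dualDim_le supportsFam_range_pairRel)
    (le_dualDim fun _ h => encard_le_encard (range_pairRel_subset_of_supportsFam h))

end Anonymous

lemma sum_range_choose_mul_pow {R : Type*} [CommSemiring R] (n : ℕ) (x : R) :
    ∑ k ∈ Finset.range (n + 1), (n.choose k : R) * x ^ k = (1 + x) ^ n := by
  rw [add_comm 1 x, add_pow]
  exact Finset.sum_congr rfl fun k _ => by rw [one_pow, mul_one, mul_comm]

theorem stmt15_general {X Y : Type*} [Fintype X] [Fintype Y]
    (hY : 2 ≤ Fintype.card Y) :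
    upperDim (anonFam X Y) = ((2 ^ Fintype.card X : ℕ) : ℕ∞) ∧
    dualDim (anonFam X Y) =
      ((∑ k ∈ Finset.range (Fintype.card X + 1),
          (Fintype.card X).choose k * ((Fintype.card Y).choose 2) ^ k : ℕ) : ℕ∞) ∧
    (∑ k ∈ Finset.range (Fintype.card X + 1),
        (Fintype.card X).choose k * ((Fintype.card Y).choose 2) ^ k : ℕ)
      = (1 + Fintype.card Y * (Fintype.card Y - 1) / 2) ^ Fintype.card X := by
  have : Nontrivial Y := Fintype.one_lt_card_iff_nontrivial.mp hY
  have hsum := sum_range_choose_mul_pow (Fintype.card X) ((Fintype.card Y).choose 2)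
  simp only [Nat.cast_id] at hsum
  rw [hsum, dualDim_anonFam, ← Nat.choose_two_right]
  exact ⟨upperDim_anonFam, rfl, rfl⟩

theorem stmt15 {X Y : Type*} [Fintype X] [Fintype Y]
    (hX : 2 ≤ Fintype.card X) (hY : 2 ≤ Fintype.card Y) :
    upperDim (anonFam X Y) = ((2 ^ Fintype.card X : ℕ) : ℕ∞) ∧
    dualDim (anonFam X Y) =
      ((∑ k ∈ Finset.range (Fintype.card X + 1),
          (Fintype.card X).choose k * ((Fintype.card Y).choose 2) ^ k : ℕ) : ℕ∞) ∧
    (∑ k ∈ Finset.range (Fintype.card X + 1),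
        (Fintype.card X).choose k * ((Fintype.card Y).choose 2) ^ k : ℕ)
      = (1 + Fintype.card Y * (Fintype.card Y - 1) / 2) ^ Fintype.card X :=
  stmt15_general hY
end
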